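/- There exists a constant C > 0 such that for every twice continuously differentiable function f : ℝ → ℝ that is 2π-periodic, one has ‖f'‖_{L²(Ω)} ≤ C ‖f‖_{L²(Ω)}^{1/2} ‖f''‖_{L²(Ω)}^{1/2}, where Ω = [−π, π]. -/

import Mathlib

open MeasureTheory Real Set

/-- The `L²` norm of `f` over one period `Ω = [-π, π]`. -/
noncomputable def L2Norm (f : ℝ → ℝ) : ℝ := (∫ x in (-π)..π, (f x) ^ 2) ^ ((1 : ℝ) / 2)

lemma periodic_deriv_aux {f : ℝ → ℝ} {c : ℝ} (h : Function.Periodic f c) :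
    Function.Periodic (deriv f) c := by
  intro x
  have h1 : (fun y => f (y + c)) = f := funext fun y => h y
  have h2 : deriv (fun y => f (y + c)) x = deriv f (x + c) := deriv_comp_add_const f c x
  rw [h1] at h2
  exact h2.symm

lemma memL2_aux {g : ℝ → ℝ} (hg : Continuous g) :
    MemLp g (ENNReal.ofReal 2) (volume.restrict (Ioc (-π) π)) := by
  have : IsFiniteMeasure (volume.restrict (Ioc (-π) π)) := by
    constructor
    rw [Measure.restrict_apply_univ, Real.volume_Ioc]
    exact ENNReal.ofReal_lt_top
  obtain ⟨C, hC⟩ := (isCompact_Icc (a := -π) (b := π)).exists_bound_of_continuousOn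
    hg.continuousOn
  refine MemLp.of_bound hg.aestronglyMeasurable C ?_
  filter_upwards [ae_restrict_mem measurableSet_Ioc] with x hx
  exact hC x (Ioc_subset_Icc_self hx)

theorem interp_L2_deriv :
    ∃ C : ℝ, 0 < C ∧ ∀ f : ℝ → ℝ, ContDiff ℝ 2 f → Function.Periodic f (2 * π) →
      L2Norm (deriv f) ≤ C * (L2Norm f) ^ ((1 : ℝ) / 2)
        * (L2Norm (deriv (deriv f))) ^ ((1 : ℝ) / 2) := by
  refine ⟨1, one_pos, fun f hf hp => ?_⟩
  have hf1 : Differentiable ℝ f := hf.differentiable (by norm_num)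
  have hfd : ContDiff ℝ 1 (deriv f) := by
    have := (contDiff_succ_iff_deriv (n := 1)).1 (by exact_mod_cast hf)
    exact this.2.2
  have hf2 : Differentiable ℝ (deriv f) := hfd.differentiable one_ne_zero
  have hcf : Continuous f := hf1.continuous
  have hcf' : Continuous (deriv f) := hf2.continuous
  have hcf'' : Continuous (deriv (deriv f)) := by
    have := (contDiff_succ_iff_deriv (n := 0)).1 hfd
    exact this.2.2.continuous
  -- integration by parts
  have hparts : ∫ x in (-π)..π, f x * deriv (deriv f) x
      = f π * deriv f π - f (-π) * deriv f (-π)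
        - ∫ x in (-π)..π, deriv f x * deriv f x := by
    apply intervalIntegral.integral_mul_deriv_eq_deriv_mul
    · exact fun x _ => (hf1 x).hasDerivAt
    · exact fun x _ => (hf2 x).hasDerivAt
    · exact hcf'.intervalIntegrable _ _
    · exact hcf''.intervalIntegrable _ _
  have hfp : f π = f (-π) := by
    have := hp (-π); rw [show -π + 2 * π = π by ring] at this; exact this
  have hfp' : deriv f π = deriv f (-π) := by
    have := periodic_deriv_aux hp (-π)
    rw [show -π + 2 * π = π by ring] at this; exact this
  have key : (∫ x in (-π)..π, (deriv f x) ^ 2)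
      = - ∫ x in (-π)..π, f x * deriv (deriv f) x := by
    rw [hparts, hfp, hfp']
    simp [sq]
  -- Cauchy-Schwarz
  set μ := volume.restrict (Ioc (-π) π)
  have hCS : ∫ x, |f x| * |deriv (deriv f) x| ∂μ
      ≤ (∫ x, |f x| ^ (2:ℝ) ∂μ) ^ ((1:ℝ)/2) * (∫ x, |deriv (deriv f) x| ^ (2:ℝ) ∂μ) ^ ((1:ℝ)/2) := by
    apply integral_mul_le_Lp_mul_Lq_of_nonneg (Real.holderConjugate_iff.mpr ⟨one_lt_two, by norm_num⟩ : Real.HolderConjugate 2 2)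
    · exact ae_of_all _ fun x => abs_nonneg _
    · exact ae_of_all _ fun x => abs_nonneg _
    · exact (memL2_aux hcf).abs
    · exact (memL2_aux hcf'').abs
  have habs2 : ∀ g : ℝ → ℝ, (fun x => |g x| ^ (2:ℝ)) = fun x => (g x) ^ 2 := by
    intro g; funext x
    rw [show (2:ℝ) = ((2:ℕ):ℝ) by norm_num, Real.rpow_natCast, sq_abs]
  have hle : π ≤ π := le_refl π
  have hI : (∫ x in (-π)..π, (deriv f x) ^ 2)
      ≤ (∫ x in (-π)..π, (f x) ^ 2) ^ ((1:ℝ)/2)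
        * (∫ x in (-π)..π, (deriv (deriv f) x) ^ 2) ^ ((1:ℝ)/2) := by
    rw [key]
    have h1 : - ∫ x in (-π)..π, f x * deriv (deriv f) x
        ≤ ∫ x, |f x| * |deriv (deriv f) x| ∂μ := by
      rw [intervalIntegral.integral_of_le (by linarith [Real.pi_pos])]
      calc - ∫ x in Ioc (-π) π, f x * deriv (deriv f) x
          ≤ |∫ x in Ioc (-π) π, f x * deriv (deriv f) x| := neg_le_abs _
        _ ≤ ∫ x, |f x| * |deriv (deriv f) x| ∂μ := by
            simpa [Real.norm_eq_abs, abs_mul, μ] using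
              norm_integral_le_integral_norm (fun x => f x * deriv (deriv f) x) (μ := μ)
    refine h1.trans (hCS.trans ?_)
    rw [intervalIntegral.integral_of_le (by linarith [Real.pi_pos]),
      intervalIntegral.integral_of_le (by linarith [Real.pi_pos])]
    simp only [habs2]
    exact le_refl _
  -- conclude
  set A := ∫ x in (-π)..π, (f x) ^ 2 with hA
  set B := ∫ x in (-π)..π, (deriv (deriv f) x) ^ 2 with hB
  have hA0 : 0 ≤ A := intervalIntegral.integral_nonneg (by linarith [Real.pi_pos])
    (fun x _ => sq_nonneg _)
  have hB0 : 0 ≤ B := intervalIntegral.integral_nonneg (by linarith [Real.pi_pos])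
    (fun x _ => sq_nonneg _)
  have hRHS0 : 0 ≤ A ^ ((1:ℝ)/2) * B ^ ((1:ℝ)/2) :=
    mul_nonneg (Real.rpow_nonneg hA0 _) (Real.rpow_nonneg hB0 _)
  unfold L2Norm
  rw [one_mul]
  calc (∫ x in (-π)..π, (deriv f x) ^ 2) ^ ((1:ℝ)/2)
      ≤ (A ^ ((1:ℝ)/2) * B ^ ((1:ℝ)/2)) ^ ((1:ℝ)/2) := by
        apply Real.rpow_le_rpow _ hI (by norm_num)
        exact intervalIntegral.integral_nonneg (by linarith [Real.pi_pos])
          (fun x _ => sq_nonneg _)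
    _ = (A ^ ((1:ℝ)/2)) ^ ((1:ℝ)/2) * (B ^ ((1:ℝ)/2)) ^ ((1:ℝ)/2) :=
        Real.mul_rpow (Real.rpow_nonneg hA0 _) (Real.rpow_nonneg hB0 _)
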